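/- Let V be a complex vector space of dimension n ≥ 5 with basis e_1,...,e_n. The affine tangent space to the 1-restricted chordal variety σ_2^1(Gr(3,V)) at the point [e_1∧e_2∧e_3 + e_1∧e_4∧e_5], defined as the span of derivatives at 0 of curves of the form t ↦ e_1(t)∧(e_2(t)∧e_3(t) + e_4(t)∧e_5(t)) with e_i(0) = e_i, equals V ∧ span{e_2∧e_3 + e_4∧e_5, e_1∧e_2, e_1∧e_3, e_1∧e_4, e_1∧e_5} ⊆ Λ^3 V. -/
import Mathlib

set_option synthInstance.maxHeartbeats 1000000
set_option maxHeartbeats 2000000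

open ExteriorAlgebra Module

/-- Let `V` be a complex vector space of dimension `n ≥ 5` and let
`e 0,…,e 4` be linearly independent (extendable to a basis).  The affine tangent space to the
1-restricted chordal variety `σ₂¹(Gr(3,V))` at `[e₁∧e₂∧e₃ + e₁∧e₄∧e₅]` — the span of the
derivatives of curves `t ↦ e₁(t)∧(e₂(t)∧e₃(t) + e₄(t)∧e₅(t))`, i.e. the image of the
differential of the parametrization `(v₁,…,v₅) ↦ v₁∧(v₂∧v₃ + v₄∧v₅)` — equals
`V ∧ span{e₂∧e₃ + e₄∧e₅, e₁∧e₂, e₁∧e₃, e₁∧e₄, e₁∧e₅} ⊆ Λ³V`. -/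
theorem tangent_space_one_restricted_chordal (V : Type*) [AddCommGroup V] [Module ℂ V]
    [FiniteDimensional ℂ V] (hn : 5 ≤ Module.finrank ℂ V)
    (e : Fin 5 → V) (he : LinearIndependent ℂ e) :
    Submodule.span ℂ {x : ExteriorAlgebra ℂ V | ∃ w : Fin 5 → V,
        x = ExteriorAlgebra.ι ℂ (w 0) *
              (ExteriorAlgebra.ι ℂ (e 1) * ExteriorAlgebra.ι ℂ (e 2) +
               ExteriorAlgebra.ι ℂ (e 3) * ExteriorAlgebra.ι ℂ (e 4))
          + ExteriorAlgebra.ι ℂ (e 0) *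
              (ExteriorAlgebra.ι ℂ (w 1) * ExteriorAlgebra.ι ℂ (e 2) +
               ExteriorAlgebra.ι ℂ (e 1) * ExteriorAlgebra.ι ℂ (w 2) +
               ExteriorAlgebra.ι ℂ (w 3) * ExteriorAlgebra.ι ℂ (e 4) +
               ExteriorAlgebra.ι ℂ (e 3) * ExteriorAlgebra.ι ℂ (w 4))}
      = Submodule.span ℂ {x : ExteriorAlgebra ℂ V |
          ∃ (v : V) (s : ExteriorAlgebra ℂ V),
            (s = ExteriorAlgebra.ι ℂ (e 1) * ExteriorAlgebra.ι ℂ (e 2) +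
                 ExteriorAlgebra.ι ℂ (e 3) * ExteriorAlgebra.ι ℂ (e 4) ∨
             s = ExteriorAlgebra.ι ℂ (e 0) * ExteriorAlgebra.ι ℂ (e 1) ∨
             s = ExteriorAlgebra.ι ℂ (e 0) * ExteriorAlgebra.ι ℂ (e 2) ∨
             s = ExteriorAlgebra.ι ℂ (e 0) * ExteriorAlgebra.ι ℂ (e 3) ∨
             s = ExteriorAlgebra.ι ℂ (e 0) * ExteriorAlgebra.ι ℂ (e 4)) ∧
            x = ExteriorAlgebra.ι ℂ v * s} := by
  have hsw : ∀ a b : V, ExteriorAlgebra.ι ℂ a * ExteriorAlgebra.ι ℂ b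
      = -(ExteriorAlgebra.ι ℂ b * ExteriorAlgebra.ι ℂ a) := fun a b =>
    eq_neg_of_add_eq_zero_left (ExteriorAlgebra.ι_add_mul_swap a b)
  have hcyc : ∀ a b c : V,
      ExteriorAlgebra.ι ℂ a * (ExteriorAlgebra.ι ℂ b * ExteriorAlgebra.ι ℂ c)
        = ExteriorAlgebra.ι ℂ c * (ExteriorAlgebra.ι ℂ a * ExteriorAlgebra.ι ℂ b) := by
    intro a b c
    rw [hsw b c, mul_neg, ← mul_assoc, hsw a c, neg_mul, neg_neg, mul_assoc]
  have htri : ∀ a b c : V,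
      ExteriorAlgebra.ι ℂ a * (ExteriorAlgebra.ι ℂ b * ExteriorAlgebra.ι ℂ c)
        = ExteriorAlgebra.ι ℂ b * (ExteriorAlgebra.ι ℂ c * ExteriorAlgebra.ι ℂ a) :=
    fun a b c => (hcyc a b c).trans (hcyc c a b)
  apply le_antisymm
  · rw [Submodule.span_le]
    rintro x ⟨w, rfl⟩
    have hx : ExteriorAlgebra.ι ℂ (w 0) *
              (ExteriorAlgebra.ι ℂ (e 1) * ExteriorAlgebra.ι ℂ (e 2) +
               ExteriorAlgebra.ι ℂ (e 3) * ExteriorAlgebra.ι ℂ (e 4))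
          + ExteriorAlgebra.ι ℂ (e 0) *
              (ExteriorAlgebra.ι ℂ (w 1) * ExteriorAlgebra.ι ℂ (e 2) +
               ExteriorAlgebra.ι ℂ (e 1) * ExteriorAlgebra.ι ℂ (w 2) +
               ExteriorAlgebra.ι ℂ (w 3) * ExteriorAlgebra.ι ℂ (e 4) +
               ExteriorAlgebra.ι ℂ (e 3) * ExteriorAlgebra.ι ℂ (w 4))
        = ExteriorAlgebra.ι ℂ (w 0) *
              (ExteriorAlgebra.ι ℂ (e 1) * ExteriorAlgebra.ι ℂ (e 2) +
               ExteriorAlgebra.ι ℂ (e 3) * ExteriorAlgebra.ι ℂ (e 4))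
          + ExteriorAlgebra.ι ℂ (-(w 1)) * (ExteriorAlgebra.ι ℂ (e 0) * ExteriorAlgebra.ι ℂ (e 2))
          + ExteriorAlgebra.ι ℂ (w 2) * (ExteriorAlgebra.ι ℂ (e 0) * ExteriorAlgebra.ι ℂ (e 1))
          + ExteriorAlgebra.ι ℂ (-(w 3)) * (ExteriorAlgebra.ι ℂ (e 0) * ExteriorAlgebra.ι ℂ (e 4))
          + ExteriorAlgebra.ι ℂ (w 4) * (ExteriorAlgebra.ι ℂ (e 0) * ExteriorAlgebra.ι ℂ (e 3)) := by
      simp only [map_neg, neg_mul, mul_add]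
      rw [htri (e 0) (w 1) (e 2), hsw (e 2) (e 0), mul_neg,
        hcyc (e 0) (e 1) (w 2),
        htri (e 0) (w 3) (e 4), hsw (e 4) (e 0), mul_neg,
        hcyc (e 0) (e 3) (w 4)]
      abel
    rw [hx]
    apply Submodule.add_mem
    apply Submodule.add_mem
    apply Submodule.add_mem
    apply Submodule.add_mem
    · exact Submodule.subset_span ⟨w 0, _, Or.inl rfl, rfl⟩
    · exact Submodule.subset_span ⟨-(w 1), _, Or.inr (Or.inr (Or.inl rfl)), rfl⟩
    · exact Submodule.subset_span ⟨w 2, _, Or.inr (Or.inl rfl), rfl⟩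
    · exact Submodule.subset_span ⟨-(w 3), _, Or.inr (Or.inr (Or.inr (Or.inr rfl))), rfl⟩
    · exact Submodule.subset_span ⟨w 4, _, Or.inr (Or.inr (Or.inr (Or.inl rfl))), rfl⟩
  · rw [Submodule.span_le]
    rintro x ⟨v, s, hs, rfl⟩
    rcases hs with rfl | rfl | rfl | rfl | rfl
    · refine Submodule.subset_span ⟨![v, 0, 0, 0, 0], ?_⟩
      show _ = ExteriorAlgebra.ι ℂ v * _ + ExteriorAlgebra.ι ℂ (e 0) *
        (ExteriorAlgebra.ι ℂ 0 * _ + _ * ExteriorAlgebra.ι ℂ 0 +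
         ExteriorAlgebra.ι ℂ 0 * _ + _ * ExteriorAlgebra.ι ℂ 0)
      simp
    · refine Submodule.subset_span ⟨![0, 0, v, 0, 0], ?_⟩
      show _ = ExteriorAlgebra.ι ℂ 0 * _ + ExteriorAlgebra.ι ℂ (e 0) *
        (ExteriorAlgebra.ι ℂ 0 * _ + _ * ExteriorAlgebra.ι ℂ v +
         ExteriorAlgebra.ι ℂ 0 * _ + _ * ExteriorAlgebra.ι ℂ 0)
      simp only [map_zero, zero_mul, mul_zero, add_zero, zero_add]
      exact (hcyc (e 0) (e 1) v).symm
    · refine Submodule.subset_span ⟨![0, -v, 0, 0, 0], ?_⟩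
      show _ = ExteriorAlgebra.ι ℂ 0 * _ + ExteriorAlgebra.ι ℂ (e 0) *
        (ExteriorAlgebra.ι ℂ (-v) * _ + _ * ExteriorAlgebra.ι ℂ 0 +
         ExteriorAlgebra.ι ℂ 0 * _ + _ * ExteriorAlgebra.ι ℂ 0)
      simp only [map_zero, map_neg, zero_mul, mul_zero, add_zero, zero_add, neg_mul, mul_neg]
      rw [htri v (e 0) (e 2), hsw (e 2) v, mul_neg]
    · refine Submodule.subset_span ⟨![0, 0, 0, 0, v], ?_⟩
      show _ = ExteriorAlgebra.ι ℂ 0 * _ + ExteriorAlgebra.ι ℂ (e 0) *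
        (ExteriorAlgebra.ι ℂ 0 * _ + _ * ExteriorAlgebra.ι ℂ 0 +
         ExteriorAlgebra.ι ℂ 0 * _ + _ * ExteriorAlgebra.ι ℂ v)
      simp only [map_zero, zero_mul, mul_zero, add_zero, zero_add]
      exact (hcyc (e 0) (e 3) v).symm
    · refine Submodule.subset_span ⟨![0, 0, 0, -v, 0], ?_⟩
      show _ = ExteriorAlgebra.ι ℂ 0 * _ + ExteriorAlgebra.ι ℂ (e 0) *
        (ExteriorAlgebra.ι ℂ 0 * _ + _ * ExteriorAlgebra.ι ℂ 0 +
         ExteriorAlgebra.ι ℂ (-v) * _ + _ * ExteriorAlgebra.ι ℂ 0)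
      simp only [map_zero, map_neg, zero_mul, mul_zero, add_zero, zero_add, neg_mul, mul_neg]
      rw [htri v (e 0) (e 4), hsw (e 4) v, mul_neg]
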